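/- arXiv:1603.02417 — 3 statements merged into one kernel-verified Lean document; each statement's English description precedes it below -/
import Mathlib

section
/- (Jarzynski equality from saturated reversibility) Let β > 0, let E_s, E_{s'} be energies with partition functions Z = ∑_s e^{−βE_s} and Z' = ∑_{s'} e^{−βE_{s'}}, let t(s'|s) be a stochastic matrix and w(s'|s) real work values satisfying ∑_s t(s'|s) e^{β(w(s'|s) − E_s + E_{s'})} = 1 for every s'. Then, starting from the Gibbs distribution x_s = e^{−βE_s}/Z, the exponential average satisfies ∑_{s,s'} x_s t(s'|s) e^{β w(s'|s)} = Z'/Z = e^{β ΔF}, where ΔF = β^{-1} log(Z'/Z) is minus the equilibrium free energy difference (with the paper's sign convention: work positive when extracted). -/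
/-- Jarzynski equality from saturated reversibility: if the
reversibility constraint `∑_s t(s'|s) e^{β(w(s'|s) − E_s + E_{s'})} = 1` holds
for all `s'`, then starting from the Gibbs distribution `x_s = e^{−βE_s}/Z`,
the exponential average of the work is `Z'/Z = e^{βΔF}`. -/
theorem jarzynski_from_saturated_reversibility
    {S S' : Type*} [Fintype S] [Fintype S'] [Nonempty S] [Nonempty S']
    (β : ℝ) (hβ : 0 < β)
    (E : S → ℝ) (E' : S' → ℝ)
    (t w : S → S' → ℝ)
    (ht0 : ∀ s s', 0 ≤ t s s')
    (htrow : ∀ s, ∑ s', t s s' = 1)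
    (hrev : ∀ s', ∑ s, t s s' * Real.exp (β * (w s s' - E s + E' s')) = 1)
    (Z Z' : ℝ)
    (hZ : Z = ∑ s, Real.exp (-(β * E s)))
    (hZ' : Z' = ∑ s', Real.exp (-(β * E' s'))) :
    ∑ s, ∑ s', (Real.exp (-(β * E s)) / Z) * t s s' * Real.exp (β * w s s') = Z' / Z
    ∧ Z' / Z = Real.exp (β * (β⁻¹ * Real.log (Z' / Z))) := by
  have hZpos : 0 < Z := by
    rw [hZ]; exact Finset.sum_pos (fun s _ => Real.exp_pos _) Finset.univ_nonempty
  have hZ'pos : 0 < Z' := by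
    rw [hZ']; exact Finset.sum_pos (fun s _ => Real.exp_pos _) Finset.univ_nonempty
  constructor
  · have key : ∀ s s', (Real.exp (-(β * E s)) / Z) * t s s' * Real.exp (β * w s s')
        = (Real.exp (-(β * E' s')) / Z) * (t s s' * Real.exp (β * (w s s' - E s + E' s'))) := by
      intro s s'
      rw [div_mul_eq_mul_div, div_mul_eq_mul_div, div_mul_eq_mul_div]
      congr 1
      have h1 : Real.exp (-(β * E' s')) * Real.exp (β * E' s') = 1 := by
        rw [← Real.exp_add]; simp
      rw [show β * (w s s' - E s + E' s') = β * w s s' + -(β * E s) + β * E' s' by ring,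
        Real.exp_add, Real.exp_add]
      linear_combination -(t s s' * Real.exp (β * w s s') * Real.exp (-(β * E s))) * h1
    calc ∑ s, ∑ s', (Real.exp (-(β * E s)) / Z) * t s s' * Real.exp (β * w s s')
        = ∑ s', ∑ s, (Real.exp (-(β * E' s')) / Z) * (t s s' * Real.exp (β * (w s s' - E s + E' s'))) := by
          rw [Finset.sum_comm]
          exact Finset.sum_congr rfl fun s' _ => Finset.sum_congr rfl fun s _ => key s s'
      _ = ∑ s', (Real.exp (-(β * E' s')) / Z) := by
          refine Finset.sum_congr rfl fun s' _ => ?_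
          rw [← Finset.mul_sum, hrev s', mul_one]
      _ = Z' / Z := by rw [← Finset.sum_div, ← hZ']
  · rw [← mul_assoc, mul_inv_cancel₀ hβ.ne', one_mul, Real.exp_log (div_pos hZ'pos hZpos)]
end

section
/- (Map simplification preserves constraints) Let β > 0 and suppose {t(s'|s), w(s'|s)} is a protocol with stochastic t satisfying ∑_s t(s'|s) e^{β(w(s'|s) + E_{s'} − E_s)} ≤ 1 for all s'. Define t̃(s') = e^{−βE_{s'}}/Z' (independent of s) and w̃(s) = ∑_k t(k|s) w(k|s). Then: (i) the average work under (x, t̃, w̃) equals that under (x, t, w); (ii) ∑_s t̃(s') e^{β(w̃(s) + E_{s'} − E_s)} ≤ 1 for all s'; (iii) min_k w(k|s) ≤ w̃(s) ≤ max_k w(k|s), so the worst-case deviation of w̃ from the (unchanged) mean is no larger than that of w. -/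
open Finset

/-- Map simplification preserves constraints: replacing a protocol
`(t, w)` satisfying the relaxed reversibility inequality by
`t̃(s') = e^{−βE'_{s'}}/Z'` and `w̃(s) = ∑_k t(k|s) w(k|s)` (i) preserves the
average work, (ii) preserves the reversibility inequality, and (iii) keeps each
`w̃(s)` between the min and max of `w(·|s)`. -/
theorem map_simplification_preserves_constraints
    {S S' : Type*} [Fintype S] [Fintype S'] [Nonempty S']
    (β : ℝ) (hβ : 0 < β)
    (E : S → ℝ) (E' : S' → ℝ)
    (x : S → ℝ) (hx0 : ∀ s, 0 ≤ x s) (hx1 : ∑ s, x s = 1)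
    (t w : S → S' → ℝ)
    (ht0 : ∀ s s', 0 ≤ t s s')
    (htrow : ∀ s, ∑ s', t s s' = 1)
    (hrev : ∀ s', ∑ s, t s s' * Real.exp (β * (w s s' + E' s' - E s)) ≤ 1)
    (Z' : ℝ) (hZ' : Z' = ∑ s', Real.exp (-(β * E' s')))
    (t' : S' → ℝ) (ht' : ∀ s', t' s' = Real.exp (-(β * E' s')) / Z')
    (w' : S → ℝ) (hw' : ∀ s, w' s = ∑ s', t s s' * w s s') :
    (∑ s, ∑ s', x s * t' s' * w' s = ∑ s, ∑ s', x s * t s s' * w s s')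
    ∧ (∀ s', ∑ s, t' s' * Real.exp (β * (w' s + E' s' - E s)) ≤ 1)
    ∧ (∀ s, Finset.univ.inf' Finset.univ_nonempty (w s) ≤ w' s
          ∧ w' s ≤ Finset.univ.sup' Finset.univ_nonempty (w s)) := by
  have hZpos : 0 < Z' := by
    rw [hZ']
    exact Finset.sum_pos (fun s' _ => Real.exp_pos _) Finset.univ_nonempty
  have ht'sum : ∑ s', t' s' = 1 := by
    simp only [ht']
    rw [← Finset.sum_div, ← hZ', div_self hZpos.ne']
  -- Jensen: exp (β * w' s) ≤ ∑ k, t s k * exp (β * w s k)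
  have hJ : ∀ s, Real.exp (β * w' s) ≤ ∑ k, t s k * Real.exp (β * w s k) := by
    intro s
    have h1 : β * w' s = ∑ k, t s k • (β * w s k) := by
      rw [hw', Finset.mul_sum]
      exact Finset.sum_congr rfl fun k _ => by rw [smul_eq_mul]; ring
    rw [h1]
    have := convexOn_exp.map_sum_le (fun k _ => ht0 s k) (htrow s)
      (fun (k : S') _ => Set.mem_univ (β * w s k))
    simpa using this
  refine ⟨?_, ?_, ?_⟩
  · -- (i) average work preserved
    have h1 : ∀ s, ∑ s', x s * t' s' * w' s = x s * w' s := by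
      intro s
      rw [show (fun s' => x s * t' s' * w' s) = fun s' => (x s * w' s) * t' s' from
        funext fun s' => by ring] at *
      rw [← Finset.mul_sum, ht'sum, mul_one]
    calc ∑ s, ∑ s', x s * t' s' * w' s = ∑ s, x s * w' s := by
          exact Finset.sum_congr rfl fun s _ => h1 s
      _ = ∑ s, ∑ s', x s * t s s' * w s s' := by
          refine Finset.sum_congr rfl fun s _ => ?_
          rw [hw', Finset.mul_sum]
          exact Finset.sum_congr rfl fun s' _ => by ring
  · -- (ii) reversibility inequality preserved
    intro s'
    have key : ∑ s, ∑ k, t s k * Real.exp (β * (w s k - E s)) ≤ Z' := by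
      rw [hZ', Finset.sum_comm]
      refine Finset.sum_le_sum fun k _ => ?_
      have := hrev k
      have h2 : ∑ s, t s k * Real.exp (β * (w s k + E' k - E s))
          = Real.exp (β * E' k) * ∑ s, t s k * Real.exp (β * (w s k - E s)) := by
        rw [Finset.mul_sum]
        refine Finset.sum_congr rfl fun s _ => ?_
        rw [show β * (w s k + E' k - E s) = β * E' k + β * (w s k - E s) from by ring,
          Real.exp_add]
        ring
      rw [h2] at this
      have hek : (0:ℝ) < Real.exp (β * E' k) := Real.exp_pos _
      calc ∑ s, t s k * Real.exp (β * (w s k - E s))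
          = Real.exp (-(β * E' k)) * (Real.exp (β * E' k) * ∑ s, t s k * Real.exp (β * (w s k - E s))) := by
            rw [← mul_assoc, ← Real.exp_add]; simp
        _ ≤ Real.exp (-(β * E' k)) * 1 := by
            exact mul_le_mul_of_nonneg_left this (Real.exp_pos _).le
        _ = Real.exp (-(β * E' k)) := mul_one _
    have hmain : ∑ s, Real.exp (β * (w' s - E s)) ≤ Z' := by
      refine le_trans (Finset.sum_le_sum fun s _ => ?_) key
      have : Real.exp (β * (w' s - E s)) = Real.exp (β * w' s) * Real.exp (-(β * E s)) := by
        rw [← Real.exp_add]; ring_nf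
      rw [this]
      calc Real.exp (β * w' s) * Real.exp (-(β * E s))
          ≤ (∑ k, t s k * Real.exp (β * w s k)) * Real.exp (-(β * E s)) :=
            mul_le_mul_of_nonneg_right (hJ s) (Real.exp_pos _).le
        _ = ∑ k, t s k * Real.exp (β * (w s k - E s)) := by
            rw [Finset.sum_mul]
            refine Finset.sum_congr rfl fun k _ => ?_
            rw [mul_assoc, ← Real.exp_add]
            ring_nf
    calc ∑ s, t' s' * Real.exp (β * (w' s + E' s' - E s))
        = (t' s' * Real.exp (β * E' s')) * ∑ s, Real.exp (β * (w' s - E s)) := by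
          rw [Finset.mul_sum]
          refine Finset.sum_congr rfl fun s _ => ?_
          rw [mul_assoc, ← Real.exp_add]
          ring_nf
      _ = (1 / Z') * ∑ s, Real.exp (β * (w' s - E s)) := by
          rw [ht', div_mul_eq_mul_div, ← Real.exp_add]
          simp
      _ ≤ (1 / Z') * Z' := by
          exact mul_le_mul_of_nonneg_left hmain (by positivity)
      _ = 1 := one_div_mul_cancel hZpos.ne'
  · -- (iii) bounds
    intro s
    constructor
    · rw [hw']
      calc Finset.univ.inf' Finset.univ_nonempty (w s)
          = ∑ s', t s s' * Finset.univ.inf' Finset.univ_nonempty (w s) := by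
            rw [← Finset.sum_mul, htrow, one_mul]
        _ ≤ ∑ s', t s s' * w s s' :=
            Finset.sum_le_sum fun s' _ => mul_le_mul_of_nonneg_left
              (Finset.inf'_le _ (Finset.mem_univ s')) (ht0 s s')
    · rw [hw']
      calc ∑ s', t s s' * w s s'
          ≤ ∑ s', t s s' * Finset.univ.sup' Finset.univ_nonempty (w s) :=
            Finset.sum_le_sum fun s' _ => mul_le_mul_of_nonneg_left
              (Finset.le_sup' _ (Finset.mem_univ s')) (ht0 s s')
        _ = Finset.univ.sup' Finset.univ_nonempty (w s) := by
            rw [← Finset.sum_mul, htrow, one_mul]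
end

section
/- (Trade-off between work and fluctuation bound) Let W^{(c)}(ρ) = β^{-1}(log Z' − log γ(c)) with γ(c) = X_u e^{ν(c)} + Z_+ e^{βc} + Z_− e^{−βc}, where ν(c) = β/X_u · (β^{-1} H_u + c(X_− − X_+) − ⟨E_u⟩), under the constraint X_+ ≤ 1/2 (valid for any c-bounded distribution). Then ∂W^{(c)}/∂c ≤ 1 for all c, and consequently W^{(c)}(ρ) ≤ W^{(0)}(ρ) + c. -/
/-! Differentiating `W = β⁻¹ (log Z' - log γ)` gives `W' = -γ' / (β γ)`, so `W' ≤ 1` amounts to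
`-γ' ≤ β γ`. Since `X_u ν' = β (X₋ - X₊)`, the difference `β γ + γ'` equals
`β ((1 - 2 X₊) e^ν + 2 Z₊ e^{βc})`, which is nonnegative once `X₊ ≤ 1/2`. The bound
`W(c) ≤ W(0) + c` is then the mean value inequality. -/

open Real

theorem hasDerivAt_inv_mul_sub_log {g W : ℝ → ℝ} {g' β K c : ℝ}
    (hW : ∀ x, W x = β⁻¹ * (K - log (g x))) (hg : HasDerivAt g g' c) (hpos : 0 < g c) :
    HasDerivAt W (β⁻¹ * -(g' / g c)) c := by
  rw [funext hW, ← zero_sub]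
  exact ((hasDerivAt_const c K).sub (hg.log hpos.ne')).const_mul β⁻¹

theorem inv_mul_neg_div_le_one {g g' β : ℝ} (hβ : 0 < β) (hpos : 0 < g) (hslope : -g' ≤ β * g) :
    β⁻¹ * -(g' / g) ≤ 1 := by
  rw [inv_mul_le_iff₀ hβ, mul_one, ← neg_div, div_le_iff₀ hpos]
  linarith

theorem hasDerivAt_partition_sum {ν γ : ℝ → ℝ} {ν' Xu Zp Zm β c : ℝ}
    (hγ : ∀ x, γ x = Xu * exp (ν x) + Zp * exp (β * x) + Zm * exp (-(β * x)))
    (hν : HasDerivAt ν ν' c) :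
    HasDerivAt γ
      (Xu * (exp (ν c) * ν') + Zp * (exp (β * c) * β) + Zm * (exp (-(β * c)) * -β)) c := by
  have hlin : HasDerivAt (fun x => β * x) β c := by
    simpa using (hasDerivAt_id c).const_mul β
  rw [funext hγ]
  exact ((hν.exp.const_mul Xu).add (hlin.exp.const_mul Zp)).add (hlin.neg.exp.const_mul Zm)

theorem neg_partition_deriv_le {β Xp Xm Xu Zp Zm ν' E P M : ℝ} (hβ : 0 ≤ β)
    (hXu : Xu = 1 - Xp - Xm) (hν' : Xu * ν' = β * (Xm - Xp)) (hXp : Xp ≤ 1 / 2)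
    (hZp : 0 ≤ Zp) (hE : 0 ≤ E) (hP : 0 ≤ P) :
    -(Xu * (E * ν') + Zp * (P * β) + Zm * (M * -β)) ≤ β * (Xu * E + Zp * P + Zm * M) := by
  have hgap : β * (Xu * E + Zp * P + Zm * M) + (Xu * (E * ν') + Zp * (P * β) + Zm * (M * -β))
      = β * ((1 - 2 * Xp) * E + 2 * (Zp * P)) := by
    linear_combination E * hν' + β * E * hXu
  have hgap_nonneg : 0 ≤ β * ((1 - 2 * Xp) * E + 2 * (Zp * P)) := by
    have hXp' : 0 ≤ 1 - 2 * Xp := by linarith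
    positivity
  linarith

theorem c_bounded_work_growth_le_one_general
    (β Z' Xp Xm Xu Hu Eu Zp Zm : ℝ)
    (hβ : 0 < β)
    (hXu : 0 < Xu)
    (hsum : Xu = 1 - Xp - Xm)
    (hZp : 0 ≤ Zp) (hZm : 0 ≤ Zm)
    (hXphalf : Xp ≤ 1 / 2)
    (ν γ W : ℝ → ℝ)
    (hν : ∀ c, ν c = β / Xu * (β⁻¹ * Hu + c * (Xm - Xp) - Eu))
    (hγ : ∀ c, γ c = Xu * Real.exp (ν c)
        + Zp * Real.exp (β * c) + Zm * Real.exp (-(β * c)))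
    (hW : ∀ c, W c = β⁻¹ * (Real.log Z' - Real.log (γ c))) :
    (∀ c, deriv W c ≤ 1) ∧ (∀ c, 0 ≤ c → W c ≤ W 0 + c) := by
  have hν' (c : ℝ) : HasDerivAt ν (β / Xu * (Xm - Xp)) c := by
    rw [funext hν]
    simpa using ((((hasDerivAt_id c).mul_const (Xm - Xp)).const_add (β⁻¹ * Hu)).sub_const
      Eu).const_mul (β / Xu)
  have hγ' (c : ℝ) := hasDerivAt_partition_sum hγ (hν' c)
  have hγpos (c : ℝ) : 0 < γ c := by
    rw [hγ]
    positivity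
  have hW' (c : ℝ) := hasDerivAt_inv_mul_sub_log hW (hγ' c) (hγpos c)
  have hderiv_le (c : ℝ) : deriv W c ≤ 1 := by
    rw [(hW' c).deriv]
    refine inv_mul_neg_div_le_one hβ (hγpos c) ?_
    rw [hγ c]
    exact neg_partition_deriv_le hβ.le hsum (by field_simp) hXphalf hZp (exp_pos _).le
      (exp_pos _).le
  refine ⟨hderiv_le, fun c hc => ?_⟩
  linarith [image_sub_le_mul_sub_of_deriv_le (fun x => (hW' x).differentiableAt) hderiv_le hc]

/-- Trade-off between work and fluctuation bound: for
`W(c) = β⁻¹(log Z' − log γ(c))` with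
`γ(c) = X_u e^{ν(c)} + Z₊ e^{βc} + Z₋ e^{−βc}` and
`ν(c) = (β/X_u)(β⁻¹ H_u + c(X₋ − X₊) − ⟨E_u⟩)`, under `X₊ ≤ 1/2` one has
`∂W/∂c ≤ 1`, and consequently `W(c) ≤ W(0) + c` for `c ≥ 0`. -/
theorem c_bounded_work_growth_le_one
    (β Z' Xp Xm Xu Hu Eu Zp Zm : ℝ)
    (hβ : 0 < β) (hZ' : 0 < Z')
    (hXp : 0 ≤ Xp) (hXm : 0 ≤ Xm) (hXu : 0 < Xu)
    (hsum : Xu = 1 - Xp - Xm)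
    (hZp : 0 ≤ Zp) (hZm : 0 ≤ Zm)
    (hXphalf : Xp ≤ 1 / 2)
    (ν γ W : ℝ → ℝ)
    (hν : ∀ c, ν c = β / Xu * (β⁻¹ * Hu + c * (Xm - Xp) - Eu))
    (hγ : ∀ c, γ c = Xu * Real.exp (ν c)
        + Zp * Real.exp (β * c) + Zm * Real.exp (-(β * c)))
    (hW : ∀ c, W c = β⁻¹ * (Real.log Z' - Real.log (γ c))) :
    (∀ c, deriv W c ≤ 1) ∧ (∀ c, 0 ≤ c → W c ≤ W 0 + c) :=
  c_bounded_work_growth_le_one_general β Z' Xp Xm Xu Hu Eu Zp Zm hβ hXu hsum hZp hZm hXphalf ν γ W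
    hν hγ hW
end
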